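/- Let {a_i}_{i=1}^d and {b_j}_{j=1}^d be mutually unbiased orthonormal bases of ℂ^d, and let A = {|a_i⟩⟨a_i|}_{i=1}^d and B = {|b_j⟩⟨b_j|}_{j=1}^d be the corresponding non-degenerate projective observables. Then Q_F(A→B) = 1 − 1/d, the supremum being attained at ρ = |b_1⟩⟨b_1|. -/

import Mathlib

/-! Measuring `A` dephases every state in the basis `{a_i}`; since this basis is unbiased with
respect to `{b_j}`, the resulting distribution `q^{A→B}_ρ` is uniform, `q_j = 1/d`, for every
state `ρ`. Hence `F(q, p) = d^{-1/2} ∑_j √p_j ≥ d^{-1/2}` because `√p_j ≥ p_j` for a probability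
vector `p`, with equality when `p` is a point mass, as it is for `ρ = |b_1⟩⟨b_1|`. -/

open scoped BigOperators ComplexOrder
open Matrix

noncomputable section

/-- A projective observable: a finite family of mutually orthogonal
self-adjoint idempotents summing to the identity. -/
def IsProjObs {d r : ℕ} (P : Fin r → Matrix (Fin d) (Fin d) ℂ) : Prop :=
  (∀ i, (P i).IsHermitian) ∧ (∀ i, P i * P i = P i) ∧
    (∀ i k, i ≠ k → P i * P k = 0) ∧ (∑ i, P i = 1)

/-- A density matrix: positive semidefinite with unit trace. -/
def IsDensity {d : ℕ} (ρ : Matrix (Fin d) (Fin d) ℂ) : Prop :=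
  ρ.PosSemidef ∧ ρ.trace = 1

/-- The measurement channel `E^A(ρ) = Σ_i P_i ρ P_i` of a projective observable. -/
def measChannel {d r : ℕ} (P : Fin r → Matrix (Fin d) (Fin d) ℂ)
    (ρ : Matrix (Fin d) (Fin d) ℂ) : Matrix (Fin d) (Fin d) ℂ :=
  ∑ i, P i * ρ * P i

/-- `p^B_ρ(j) = tr(P^B_j ρ)`. -/
def probB {d rB : ℕ} (Q : Fin rB → Matrix (Fin d) (Fin d) ℂ)
    (ρ : Matrix (Fin d) (Fin d) ℂ) (j : Fin rB) : ℝ :=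
  ((Q j * ρ).trace).re

/-- `q^{A→B}_ρ(j) = tr(P^B_j Σ_i P^A_i ρ P^A_i)`. -/
def probAB {d rA rB : ℕ} (P : Fin rA → Matrix (Fin d) (Fin d) ℂ)
    (Q : Fin rB → Matrix (Fin d) (Fin d) ℂ)
    (ρ : Matrix (Fin d) (Fin d) ℂ) (j : Fin rB) : ℝ :=
  ((Q j * measChannel P ρ).trace).re

open Classical in
/-- The positive semidefinite square root of a PSD matrix (junk value `0` otherwise). -/
noncomputable def msqrt {d : ℕ} (A : Matrix (Fin d) (Fin d) ℂ) :
    Matrix (Fin d) (Fin d) ℂ :=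
  if h : A.PosSemidef then
    (h.1.eigenvectorUnitary : Matrix (Fin d) (Fin d) ℂ) *
      diagonal (((↑) : ℝ → ℂ) ∘ Real.sqrt ∘ h.1.eigenvalues) *
      (star h.1.eigenvectorUnitary : Matrix (Fin d) (Fin d) ℂ)
  else 0

/-- `|X| = √(Xᴴ X)`, the positive semidefinite absolute value of a matrix. -/
noncomputable def matAbs {d : ℕ} (X : Matrix (Fin d) (Fin d) ℂ) :
    Matrix (Fin d) (Fin d) ℂ :=
  msqrt (Xᴴ * X)

/-- The quantum fidelity `F(ρ,σ) = tr √(√ρ σ √ρ)`. -/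
noncomputable def qFid {d : ℕ} (ρ σ : Matrix (Fin d) (Fin d) ℂ) : ℝ :=
  ((msqrt (msqrt ρ * σ * msqrt ρ)).trace).re

/-- Variational distance `D_1(p,q) = (1/2) Σ_j |p_j − q_j|`. -/
def distL1 {rB : ℕ} (p q : Fin rB → ℝ) : ℝ := (1 / 2) * ∑ j, |p j - q j|

/-- Chebyshev distance `D_∞(p,q) = max_j |p_j − q_j|`. -/
noncomputable def distLinf {rB : ℕ} (p q : Fin rB → ℝ) : ℝ := ⨆ j, |p j - q j|

/-- Classical fidelity `F(p,q) = Σ_j √(p_j q_j)`. -/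
noncomputable def classFid {rB : ℕ} (p q : Fin rB → ℝ) : ℝ :=
  ∑ j, Real.sqrt (p j * q j)

/-- `Q_1(A→B)`. -/
noncomputable def Q1 {d rA rB : ℕ} (P : Fin rA → Matrix (Fin d) (Fin d) ℂ)
    (Q : Fin rB → Matrix (Fin d) (Fin d) ℂ) : ℝ :=
  sSup {x : ℝ | ∃ ρ, IsDensity ρ ∧ x = distL1 (probAB P Q ρ) (probB Q ρ)}

/-- `Q_∞(A→B)`. -/
noncomputable def Qinf {d rA rB : ℕ} (P : Fin rA → Matrix (Fin d) (Fin d) ℂ)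
    (Q : Fin rB → Matrix (Fin d) (Fin d) ℂ) : ℝ :=
  sSup {x : ℝ | ∃ ρ, IsDensity ρ ∧ x = distLinf (probAB P Q ρ) (probB Q ρ)}

/-- `Q_F(A→B)`. -/
noncomputable def QF {d rA rB : ℕ} (P : Fin rA → Matrix (Fin d) (Fin d) ℂ)
    (Q : Fin rB → Matrix (Fin d) (Fin d) ℂ) : ℝ :=
  sSup {x : ℝ | ∃ ρ, IsDensity ρ ∧
    x = 1 - (classFid (probAB P Q ρ) (probB Q ρ)) ^ 2}

/-- The rank-one projection `|v⟩⟨v|` onto a (unit) vector `v`. -/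
def proj {d : ℕ} (v : Fin d → ℂ) : Matrix (Fin d) (Fin d) ℂ :=
  Matrix.vecMulVec v (star v)

section RankOneProjections

variable {d : ℕ}

lemma proj_mulVec (v w : Fin d → ℂ) : proj v *ᵥ w = (star v ⬝ᵥ w) • v := by
  rw [proj, vecMulVec_mulVec, op_smul_eq_smul]

lemma trace_proj_mul (v : Fin d → ℂ) (M : Matrix (Fin d) (Fin d) ℂ) :
    (proj v * M).trace = star v ⬝ᵥ (M *ᵥ v) := by
  rw [trace_mul_comm, proj, mul_vecMulVec, trace_vecMulVec, dotProduct_comm]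

lemma proj_mul_mul_proj (v : Fin d → ℂ) (M : Matrix (Fin d) (Fin d) ℂ) :
    proj v * M * proj v = (star v ⬝ᵥ (M *ᵥ v)) • proj v := by
  rw [proj, Matrix.mul_assoc, mul_vecMulVec, vecMulVec_mul_vecMulVec, vecMulVec_smul]

lemma trace_proj_mul_proj (v w : Fin d → ℂ) :
    (proj v * proj w).trace = Complex.normSq (star w ⬝ᵥ v) := by
  rw [trace_proj_mul, proj_mulVec, dotProduct_smul, smul_eq_mul, ← Complex.mul_conj,
    ← Complex.star_def, Matrix.star_dotProduct, star_star]

lemma sum_proj_eq_one (a : Fin d → Fin d → ℂ)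
    (ha : ∀ i j, star (a i) ⬝ᵥ a j = if i = j then 1 else 0) :
    ∑ i, proj (a i) = 1 := by
  set U : Matrix (Fin d) (Fin d) ℂ := (Matrix.of a)ᵀ
  have hU : Uᴴ * U = 1 := by
    ext i j
    simpa [U, Matrix.mul_apply, Matrix.one_apply, dotProduct] using ha i j
  have hU' : U * Uᴴ = ∑ i, proj (a i) := by
    ext k l
    simp [U, proj, Matrix.mul_apply, Matrix.sum_apply, vecMulVec_apply]
  rw [← hU', mul_eq_one_comm.mp hU]

variable {r : ℕ}

lemma measChannel_proj (a : Fin r → Fin d → ℂ) (ρ : Matrix (Fin d) (Fin d) ℂ) :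
    measChannel (fun i => proj (a i)) ρ = ∑ i, (star (a i) ⬝ᵥ (ρ *ᵥ a i)) • proj (a i) :=
  Finset.sum_congr rfl fun i _ => proj_mul_mul_proj (a i) ρ

lemma sum_dotProduct_mulVec_eq_trace {a : Fin r → Fin d → ℂ} (hA : ∑ i, proj (a i) = 1)
    (ρ : Matrix (Fin d) (Fin d) ℂ) : ∑ i, star (a i) ⬝ᵥ (ρ *ᵥ a i) = ρ.trace := by
  simp_rw [← trace_proj_mul, ← trace_sum, ← Finset.sum_mul, hA, Matrix.one_mul]

lemma probAB_proj_of_normSq_eq {a : Fin r → Fin d → ℂ} {b : Fin d → Fin d → ℂ} {c : ℝ}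
    (hA : ∑ i, proj (a i) = 1) (hab : ∀ i j, Complex.normSq (star (a i) ⬝ᵥ b j) = c)
    (ρ : Matrix (Fin d) (Fin d) ℂ) (j : Fin d) :
    probAB (fun i => proj (a i)) (fun j => proj (b j)) ρ j = c * ρ.trace.re := by
  have hsum : (proj (b j) * measChannel (fun i => proj (a i)) ρ).trace = ρ.trace * c := by
    simp_rw [measChannel_proj, Finset.mul_sum, trace_sum, Matrix.mul_smul, trace_smul,
      trace_proj_mul_proj, hab, smul_eq_mul, ← Finset.sum_mul, sum_dotProduct_mulVec_eq_trace hA]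
  rw [probAB, hsum, Complex.re_mul_ofReal, mul_comm]

lemma sum_probB {rB : ℕ} {Q : Fin rB → Matrix (Fin d) (Fin d) ℂ} (hQ : ∑ j, Q j = 1)
    (ρ : Matrix (Fin d) (Fin d) ℂ) : ∑ j, probB Q ρ j = ρ.trace.re := by
  simp_rw [probB, ← Complex.re_sum, ← trace_sum, ← Finset.sum_mul, hQ, Matrix.one_mul]

lemma probB_proj_nonneg (b : Fin r → Fin d → ℂ) {ρ : Matrix (Fin d) (Fin d) ℂ}
    (hρ : ρ.PosSemidef) (j : Fin r) : 0 ≤ probB (fun j => proj (b j)) ρ j := by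
  rw [probB, trace_proj_mul]
  exact (Complex.nonneg_iff.mp (hρ.dotProduct_mulVec_nonneg (b j))).1

lemma isDensity_proj {v : Fin d → ℂ} (hv : star v ⬝ᵥ v = 1) : IsDensity (proj v) :=
  ⟨posSemidef_vecMulVec_self_star v, by rw [proj, trace_vecMulVec, dotProduct_comm, hv]⟩

lemma probB_proj_self {b : Fin r → Fin d → ℂ}
    (hb : ∀ i j, star (b i) ⬝ᵥ b j = if i = j then 1 else 0) (k : Fin r) :
    probB (fun j => proj (b j)) (proj (b k)) = fun j => if j = k then 1 else 0 := by
  ext j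
  rw [probB, trace_proj_mul_proj, hb, Complex.ofReal_re]
  split_ifs <;> simp_all

end RankOneProjections

section ClassicalFidelity

variable {r : ℕ} {c : ℝ}

lemma one_le_sum_sqrt {ι : Type*} [Fintype ι] {p : ι → ℝ} (hp : ∀ i, 0 ≤ p i)
    (h1 : ∑ i, p i = 1) : 1 ≤ ∑ i, √(p i) := by
  have hle : ∀ i, p i ≤ 1 := fun i =>
    h1 ▸ Finset.single_le_sum (fun k _ => hp k) (Finset.mem_univ i)
  calc 1 = ∑ i, p i := h1.symm
    _ ≤ ∑ i, √(p i) := Finset.sum_le_sum fun i _ => Real.le_sqrt_self_iff.mpr (hle i)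

lemma classFid_const_left (hc : 0 ≤ c) (p : Fin r → ℝ) :
    classFid (fun _ => c) p = √c * ∑ j, √(p j) := by
  simp_rw [classFid, Real.sqrt_mul hc, Finset.mul_sum]

lemma le_classFid_const_left_sq (hc : 0 ≤ c) {p : Fin r → ℝ}
    (hp : ∀ j, 0 ≤ p j) (h1 : ∑ j, p j = 1) : c ≤ classFid (fun _ => c) p ^ 2 := by
  have hs := one_le_sum_sqrt hp h1
  rw [classFid_const_left hc, mul_pow, Real.sq_sqrt hc]
  exact le_mul_of_one_le_right hc (one_le_pow₀ hs)

lemma classFid_const_left_single (hc : 0 ≤ c) (k : Fin r) :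
    classFid (fun _ => c) (fun j => if j = k then 1 else 0) = √c := by
  rw [classFid_const_left hc]
  simp [apply_ite Real.sqrt]

end ClassicalFidelity

theorem stmt_10 {d : ℕ} (hd : 0 < d)
    (a b : Fin d → (Fin d → ℂ))
    (ha : ∀ i j, star (a i) ⬝ᵥ a j = if i = j then 1 else 0)
    (hb : ∀ i j, star (b i) ⬝ᵥ b j = if i = j then 1 else 0)
    (hmub : ∀ i j, Complex.normSq (star (a i) ⬝ᵥ b j) = 1 / (d : ℝ)) :
    QF (fun i => proj (a i)) (fun j => proj (b j)) = 1 - 1 / (d : ℝ) ∧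
      1 - (classFid
            (probAB (fun i => proj (a i)) (fun j => proj (b j)) (proj (b ⟨0, hd⟩)))
            (probB (fun j => proj (b j)) (proj (b ⟨0, hd⟩)))) ^ 2
        = 1 - 1 / (d : ℝ) := by
  have hc : (0 : ℝ) ≤ 1 / d := by positivity
  have hq : ∀ ρ : Matrix (Fin d) (Fin d) ℂ, IsDensity ρ →
      probAB (fun i => proj (a i)) (fun j => proj (b j)) ρ = fun _ => 1 / (d : ℝ) :=
    fun ρ hρ => funext fun j => by
      rw [probAB_proj_of_normSq_eq (sum_proj_eq_one a ha) hmub, hρ.2, Complex.one_re, mul_one]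
  have hle : ∀ ρ, IsDensity ρ → 1 - (classFid (probAB (fun i => proj (a i))
      (fun j => proj (b j)) ρ) (probB (fun j => proj (b j)) ρ)) ^ 2 ≤ 1 - 1 / (d : ℝ) := by
    intro ρ hρ
    rw [hq ρ hρ]
    have := le_classFid_const_left_sq hc (probB_proj_nonneg b hρ.1)
      (by rw [sum_probB (sum_proj_eq_one b hb), hρ.2, Complex.one_re])
    linarith
  have hbasis := isDensity_proj ((hb ⟨0, hd⟩ ⟨0, hd⟩).trans (if_pos rfl))
  have hval : 1 - (classFid
      (probAB (fun i => proj (a i)) (fun j => proj (b j)) (proj (b ⟨0, hd⟩)))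
      (probB (fun j => proj (b j)) (proj (b ⟨0, hd⟩)))) ^ 2 = 1 - 1 / (d : ℝ) := by
    rw [hq _ hbasis, probB_proj_self hb, classFid_const_left_single hc, Real.sq_sqrt hc]
  exact ⟨IsGreatest.csSup_eq ⟨⟨_, hbasis, hval.symm⟩, fun _ ⟨ρ, hρ, hx⟩ => hx ▸ hle ρ hρ⟩, hval⟩
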